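/- arXiv:2105.09032 — 2 statements merged into one kernel-verified Lean document; each statement's English description precedes it below -/
import Mathlib

section
/- Fix λ ∈ (0,1) and independent p-values p_1,...,p_m all corresponding to true nulls, each stochastically lower bounded by uniform. Let π̂_0(p) = (1 + Σ_{i=1}^m 1(p_i > λ)) / ((1−λ)·m) be the modified Storey estimator, and for each i let p_{0,i} denote p with the i-th coordinate replaced by 0. Then E[1/π̂_0(p_{0,i})] ≤ 1, i.e., E[ (1−λ)·m / (1 + Σ_{j≠i} 1(p_j > λ)) ] ≤ 1. -/
open MeasureTheory ProbabilityTheory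
open scoped Classical

noncomputable section

lemma aux_int_of_bdd {Ω : Type*} [MeasurableSpace Ω] {μ : Measure Ω} [IsProbabilityMeasure μ]
    {f : Ω → ℝ} (hf : Measurable f) {C : ℝ} (h : ∀ ω, |f ω| ≤ C) : Integrable f μ :=
  (integrable_const C).mono' hf.aestronglyMeasurable (Filter.Eventually.of_forall h)

lemma aux_prod_integral {Ω ι : Type*} [MeasurableSpace Ω] {μ : Measure Ω}
    [IsProbabilityMeasure μ] {f : ι → Ω → ℝ}
    (hindep : iIndepFun f μ)
    (hmeas : ∀ j, Measurable (f j)) (hpos : ∀ j ω, 0 ≤ f j ω) (S : Finset ι) :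
    ∫ ω, ∏ j ∈ S, f j ω ∂μ = ∏ j ∈ S, ∫ ω, f j ω ∂μ := by
  classical
  induction S using Finset.induction_on with
  | empty => simp
  | @insert a S ha ih =>
    have hPmeas : Measurable (∏ j ∈ S, f j) := by
      have : (∏ j ∈ S, f j) = fun a => ∏ j ∈ S, f j a := funext fun a => by simp
      rw [this]; exact Finset.measurable_prod S fun j _ => hmeas j
    have hI : IndepFun (f a) (∏ j ∈ S, f j) μ :=
      (hindep.indepFun_finset_prod_of_notMem hmeas ha).symm
    have h1 : ∫ ω, ∏ j ∈ insert a S, f j ω ∂μ = ∫ ω, (f a * ∏ j ∈ S, f j) ω ∂μ := by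
      refine integral_congr_ae (Filter.Eventually.of_forall fun ω => ?_)
      simp [Finset.prod_insert ha]
    rw [h1, hI.integral_mul_eq_mul_integral (hmeas a).aestronglyMeasurable
      hPmeas.aestronglyMeasurable, Finset.prod_insert ha]
    congr 1
    rw [← ih]
    refine integral_congr_ae (Filter.Eventually.of_forall fun ω => ?_)
    simp

/-- For the modified Storey estimator `π̂₀(λ)` with all nulls true, independent
superuniform p-values: `E[1/π̂₀(p_{0,i})] ≤ 1`, i.e.
`E[(1−λ)·m / (1 + Σ_{j≠i} 1(p_j > λ))] ≤ 1`. -/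
theorem stmt18 {Ω : Type*} [MeasurableSpace Ω] (μ : Measure Ω) [IsProbabilityMeasure μ]
    {m : ℕ} (hm : 0 < m)
    (lam : ℝ) (hlam : lam ∈ Set.Ioo (0:ℝ) 1)
    (p : Ω → Fin m → ℝ) (hp : Measurable p)
    (hrange : ∀ ω i, p ω i ∈ Set.Icc (0:ℝ) 1)
    (hindep : iIndepFun (fun i ω => p ω i) μ)
    (hsuper : ∀ i, ∀ t ∈ Set.Icc (0:ℝ) 1, μ {ω | p ω i ≤ t} ≤ ENNReal.ofReal t)
    (i : Fin m) :
    ∫ ω, ((1 - lam) * m) /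
        (1 + ((Finset.univ.filter fun j => j ≠ i ∧ lam < p ω j).card : ℝ)) ∂μ ≤ 1 := by
  obtain ⟨hl0, hl1⟩ := hlam
  have hl1' : (0:ℝ) < 1 - lam := by linarith
  set S : Finset (Fin m) := Finset.univ.filter (· ≠ i) with hS
  set n : ℕ := S.card with hn
  have hcard : n + 1 = m := by
    rw [hn, hS, Finset.filter_ne', Finset.card_erase_of_mem (Finset.mem_univ i)]
    simp [Nat.sub_add_cancel hm]
  set B : Ω → ℕ := fun ω => (S.filter fun j => lam < p ω j).card with hBdef
  have hpj : ∀ j : Fin m, Measurable fun ω => p ω j := fun j => (measurable_pi_apply j).comp hp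
  have hMj : ∀ j : Fin m, MeasurableSet {ω | lam < p ω j} := fun j =>
    measurableSet_lt measurable_const (hpj j)
  have hB : Measurable B := by
    have hB' : B = fun ω => ∑ j ∈ S, if lam < p ω j then 1 else 0 :=
      funext fun ω => Finset.card_filter _ _
    rw [hB']
    exact Finset.measurable_sum S fun j _ =>
      Measurable.ite (hMj j) measurable_const measurable_const
  have hBle : ∀ ω, B ω ≤ n := fun ω => Finset.card_filter_le _ _
  have hfilter : ∀ ω,
      (Finset.univ.filter fun j => j ≠ i ∧ lam < p ω j) = S.filter fun j => lam < p ω j := by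
    intro ω; rw [hS, Finset.filter_filter]
  -- measurable sets {B = k}
  have hBk : ∀ k : ℕ, MeasurableSet {ω | B ω = k} := fun k => hB (measurableSet_singleton k)
  set P : ℕ → ℝ := fun k => (μ {ω | B ω = k}).toReal with hP
  have hPnn : ∀ k, 0 ≤ P k := fun k => ENNReal.toReal_nonneg
  -- integral of the indicator of {B = k}
  have hind_int : ∀ k : ℕ, ∫ ω, (if B ω = k then (1:ℝ) else 0) ∂μ = P k := by
    intro k
    have : (fun ω => if B ω = k then (1:ℝ) else 0) = Set.indicator {ω | B ω = k} 1 := by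
      funext ω; by_cases h : B ω = k <;> simp [Set.indicator_apply, Set.mem_setOf_eq, h]
    rw [this, integral_indicator_one (hBk k)]; rfl
  -- decomposition of g ∘ B into a finite sum
  have hdecomp : ∀ (g : ℕ → ℝ) (ω : Ω),
      g (B ω) = ∑ k ∈ Finset.range (n+1), (if B ω = k then (1:ℝ) else 0) * g k := by
    intro g ω
    rw [Finset.sum_eq_single (B ω)]
    · simp
    · intro k _ hk; simp [Ne.symm hk]
    · intro h; exact absurd (Finset.mem_range.mpr (Nat.lt_succ_of_le (hBle ω))) h
  have hsummand_int : ∀ (g : ℕ → ℝ) (k : ℕ),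
      Integrable (fun ω => (if B ω = k then (1:ℝ) else 0) * g k) μ := by
    intro g k
    have hms : Measurable fun ω => (if B ω = k then (1:ℝ) else 0) :=
      Measurable.ite (hBk k) measurable_const measurable_const
    refine aux_int_of_bdd (C := |g k|) (hms.mul_const _) ?_
    intro ω; by_cases h : B ω = k <;> simp [h, abs_nonneg]
  have hIg : ∀ g : ℕ → ℝ, ∫ ω, g (B ω) ∂μ = ∑ k ∈ Finset.range (n+1), P k * g k := by
    intro g
    calc ∫ ω, g (B ω) ∂μ
        = ∫ ω, ∑ k ∈ Finset.range (n+1), (if B ω = k then (1:ℝ) else 0) * g k ∂μ := by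
          refine integral_congr_ae (Filter.Eventually.of_forall fun ω => ?_)
          exact hdecomp g ω
      _ = ∑ k ∈ Finset.range (n+1), ∫ ω, (if B ω = k then (1:ℝ) else 0) * g k ∂μ :=
          integral_finset_sum _ fun k _ => hsummand_int g k
      _ = ∑ k ∈ Finset.range (n+1), P k * g k := by
          refine Finset.sum_congr rfl fun k _ => ?_
          rw [integral_mul_const, hind_int k]
  -- core independence bound
  have hcore : ∀ x ∈ Set.Icc (0:ℝ) 1,
      ∑ k ∈ Finset.range (n+1), P k * x ^ k ≤ (lam + (1-lam)*x) ^ n := by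
    intro x hx
    obtain ⟨hx0, hx1⟩ := hx
    rw [← hIg (fun k => x ^ k)]
    set f : Fin m → Ω → ℝ := fun j ω => if lam < p ω j then x else 1 with hf
    have hfpos : ∀ j ω, 0 ≤ f j ω := by
      intro j ω; by_cases h : lam < p ω j <;> simp [hf, h, hx0]
    have hfmeas : ∀ j, Measurable (f j) := fun j =>
      Measurable.ite (hMj j) measurable_const measurable_const
    have hf_indep : iIndepFun f μ := by
      have := hindep.comp (g := fun _ : Fin m => fun t : ℝ => if lam < t then x else 1)
        (fun j => Measurable.ite (measurableSet_lt measurable_const measurable_id)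
          measurable_const measurable_const)
      exact this
    have hprod : ∀ ω, x ^ B ω = ∏ j ∈ S, f j ω := by
      intro ω
      rw [hBdef]
      simp only [hf]
      rw [Finset.prod_ite (fun _ => x) (fun _ => (1:ℝ)), Finset.prod_const, Finset.prod_const,
        one_pow, mul_one]
    have h1 : ∫ ω, x ^ B ω ∂μ = ∏ j ∈ S, ∫ ω, f j ω ∂μ := by
      rw [show (fun ω => x ^ B ω) = fun ω => ∏ j ∈ S, f j ω from funext hprod]
      exact aux_prod_integral hf_indep hfmeas hfpos S
    rw [h1]
    have hfactor : ∀ j ∈ S, ∫ ω, f j ω ∂μ ≤ lam + (1-lam)*x := by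
      intro j _
      have hQdef : ∫ ω, f j ω ∂μ
          = 1 - (1-x) * (μ {ω | lam < p ω j}).toReal := by
        have heq : ∀ ω, f j ω = 1 - (1-x) * (if lam < p ω j then (1:ℝ) else 0) := by
          intro ω; by_cases h : lam < p ω j <;> simp [hf, h] <;> ring
        have hii : Integrable (fun ω => (if lam < p ω j then (1:ℝ) else 0)) μ := by
          refine aux_int_of_bdd (C := 1) (Measurable.ite (hMj j) measurable_const measurable_const) ?_
          intro ω; by_cases h : lam < p ω j <;> simp [h]
        calc ∫ ω, f j ω ∂μ
            = ∫ ω, 1 - (1-x) * (if lam < p ω j then (1:ℝ) else 0) ∂μ := by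
              exact integral_congr_ae (Filter.Eventually.of_forall heq)
          _ = 1 - (1-x) * ∫ ω, (if lam < p ω j then (1:ℝ) else 0) ∂μ := by
              rw [integral_sub (integrable_const 1) (hii.const_mul _), integral_const,
                integral_const_mul]
              simp
          _ = 1 - (1-x) * (μ {ω | lam < p ω j}).toReal := by
              congr 1
              have h2 : (fun ω => if lam < p ω j then (1:ℝ) else 0)
                  = Set.indicator {ω | lam < p ω j} 1 := by
                funext ω; by_cases h : lam < p ω j <;>
                  simp [Set.indicator_apply, Set.mem_setOf_eq, h]
              rw [h2, integral_indicator_one (hMj j)]; rfl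
      have hQge : 1 - lam ≤ (μ {ω | lam < p ω j}).toReal := by
        have hcompl : {ω | lam < p ω j} = {ω | p ω j ≤ lam}ᶜ := by
          ext ω; simp [not_le]
        have hle : μ {ω | p ω j ≤ lam} ≤ ENNReal.ofReal lam :=
          hsuper j lam ⟨hl0.le, hl1.le⟩
        have hms : MeasurableSet {ω | p ω j ≤ lam} :=
          measurableSet_le (hpj j) measurable_const
        rw [hcompl, prob_compl_eq_one_sub hms]
        have hle1 : μ {ω | p ω j ≤ lam} ≤ 1 := prob_le_one
        rw [ENNReal.toReal_sub_of_le hle1 ENNReal.one_ne_top]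
        have : (μ {ω | p ω j ≤ lam}).toReal ≤ lam := by
          calc (μ {ω | p ω j ≤ lam}).toReal ≤ (ENNReal.ofReal lam).toReal :=
                ENNReal.toReal_mono ENNReal.ofReal_ne_top hle
            _ = lam := ENNReal.toReal_ofReal hl0.le
        simp only [ENNReal.toReal_one]
        linarith
      rw [hQdef]
      nlinarith [ENNReal.toReal_nonneg (a := μ {ω | lam < p ω j})]
    have hfactor0 : ∀ j ∈ S, 0 ≤ ∫ ω, f j ω ∂μ := fun j _ =>
      integral_nonneg fun ω => hfpos j ω
    calc ∏ j ∈ S, ∫ ω, f j ω ∂μ ≤ ∏ _j ∈ S, (lam + (1-lam)*x) :=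
          Finset.prod_le_prod hfactor0 hfactor
      _ = (lam + (1-lam)*x) ^ n := by rw [Finset.prod_const]
  -- integrability of the polynomial functions on [0,1]
  have hcont1 : Continuous fun x : ℝ => ∑ k ∈ Finset.range (n+1), P k * x ^ k := by
    exact continuous_finset_sum _ fun k _ => continuous_const.mul (continuous_pow k)
  have hcont2 : Continuous fun x : ℝ => (lam + (1-lam)*x) ^ n :=
    ((continuous_const.add (continuous_const.mul continuous_id)).pow n)
  -- the sum equals an interval integral
  have hsum_eq : ∑ k ∈ Finset.range (n+1), P k * (1 + (k:ℝ))⁻¹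
      = ∫ x in (0:ℝ)..1, ∑ k ∈ Finset.range (n+1), P k * x ^ k := by
    rw [intervalIntegral.integral_finset_sum]
    · refine Finset.sum_congr rfl fun k _ => ?_
      rw [intervalIntegral.integral_const_mul, integral_pow, one_pow,
        zero_pow (Nat.succ_ne_zero k)]
      push_cast
      ring
    · intro k _
      exact (continuous_const.mul (continuous_pow k)).intervalIntegrable 0 1
  -- bound the interval integral
  have hmono : (∫ x in (0:ℝ)..1, ∑ k ∈ Finset.range (n+1), P k * x ^ k)
      ≤ ∫ x in (0:ℝ)..1, (lam + (1-lam)*x) ^ n := by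
    refine intervalIntegral.integral_mono_on (by norm_num)
      (hcont1.intervalIntegrable 0 1) (hcont2.intervalIntegrable 0 1) hcore
  -- compute the right integral
  have hcomp : (∫ x in (0:ℝ)..1, (lam + (1-lam)*x) ^ n)
      = (1-lam)⁻¹ * ((1 - lam ^ (n+1)) / (n+1)) := by
    have h1 : (∫ x in (0:ℝ)..1, (lam + (1-lam)*x) ^ n)
        = ∫ x in (0:ℝ)..1, ((1-lam) * x + lam) ^ n := by
      refine intervalIntegral.integral_congr fun x _ => ?_
      ring_nf
    rw [h1, intervalIntegral.integral_comp_mul_add (fun u => u ^ n) (ne_of_gt hl1') lam]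
    simp only [mul_zero, zero_add, mul_one, smul_eq_mul]
    rw [integral_pow]
    have : (1:ℝ) - lam + lam = 1 := by ring
    rw [this, one_pow]
  have hfinal : (∫ x in (0:ℝ)..1, (lam + (1-lam)*x) ^ n) ≤ (1-lam)⁻¹ * (1/m) := by
    rw [hcomp]
    have hlp : 0 ≤ lam ^ (n+1) := pow_nonneg hl0.le _
    have hm1 : ((n:ℝ)+1) = (m:ℝ) := by exact_mod_cast congrArg (Nat.cast : ℕ → ℝ) hcard
    rw [hm1]
    have hmpos : (0:ℝ) < m := by exact_mod_cast hm
    apply mul_le_mul_of_nonneg_left _ (inv_nonneg.mpr hl1'.le)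
    exact (div_le_div_iff_of_pos_right hmpos).mpr (by linarith)
  -- assemble
  have hmain : ∫ ω, (1 + (B ω : ℝ))⁻¹ ∂μ ≤ (1-lam)⁻¹ * (1/m) := by
    have := hIg fun k => (1 + (k:ℝ))⁻¹
    calc ∫ ω, (1 + (B ω : ℝ))⁻¹ ∂μ = ∑ k ∈ Finset.range (n+1), P k * (1 + (k:ℝ))⁻¹ := this
      _ = ∫ x in (0:ℝ)..1, ∑ k ∈ Finset.range (n+1), P k * x ^ k := hsum_eq
      _ ≤ ∫ x in (0:ℝ)..1, (lam + (1-lam)*x) ^ n := hmono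
      _ ≤ (1-lam)⁻¹ * (1/m) := hfinal
  have hrw : ∫ ω, ((1 - lam) * m) /
        (1 + ((Finset.univ.filter fun j => j ≠ i ∧ lam < p ω j).card : ℝ)) ∂μ
      = (1-lam) * m * ∫ ω, (1 + (B ω : ℝ))⁻¹ ∂μ := by
    rw [← integral_const_mul]
    refine integral_congr_ae (Filter.Eventually.of_forall fun ω => ?_)
    simp only [hfilter ω, div_eq_mul_inv]
    rfl
  rw [hrw]
  have hmpos : (0:ℝ) < m := by exact_mod_cast hm
  calc (1-lam) * m * ∫ ω, (1 + (B ω : ℝ))⁻¹ ∂μ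
      ≤ (1-lam) * m * ((1-lam)⁻¹ * (1/m)) := by
        refine mul_le_mul_of_nonneg_left hmain (by positivity)
    _ = 1 := by field_simp
end
end

section
/- Let P be a [0,1]-valued random variable with P(P ≤ t) ≤ t for all t ∈ [0,1], independent of a nonnegative random variable V. Then for every c > 0, E[1(P ≤ c·V)/V] ≤ c, where 0/0 := 0; i.e., an independent superuniform p-value satisfies the dependency control condition with the identity shape function against any nonnegative random variable. -/
open MeasureTheory ProbabilityTheory

noncomputable section

/-- An independent superuniform p-value satisfies the dependency control condition with
the identity shape function against any nonnegative random variable: for `P`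
superuniform, independent of `V ≥ 0`, and any `c > 0`, `E[1(P ≤ c·V)/V] ≤ c`
(the quotient being `0` on `{V = 0}`). -/
theorem stmt19 {Ω : Type*} [MeasurableSpace Ω] (μ : Measure Ω) [IsProbabilityMeasure μ]
    (P V : Ω → ℝ) (hPm : Measurable P) (hVm : Measurable V)
    (hrange : ∀ ω, P ω ∈ Set.Icc (0:ℝ) 1) (hV0 : ∀ ω, 0 ≤ V ω)
    (hsuper : ∀ t ∈ Set.Icc (0:ℝ) 1, μ {ω | P ω ≤ t} ≤ ENNReal.ofReal t)
    (hindep : IndepFun P V μ) :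
    ∀ c : ℝ, 0 < c → ∫ ω, (if P ω ≤ c * V ω then (V ω)⁻¹ else 0) ∂μ ≤ c := by
  intro c hc
  set g : ℝ × ℝ → ENNReal := fun q => if q.1 ≤ c * q.2 then ENNReal.ofReal q.2⁻¹ else 0 with hg
  have hgm : Measurable g := by
    apply Measurable.ite
    · exact measurableSet_le measurable_fst (measurable_const.mul measurable_snd)
    · exact measurable_snd.inv.ennreal_ofReal
    · exact measurable_const
  have hmap : μ.map (fun ω => (P ω, V ω)) = (μ.map P).prod (μ.map V) :=
    (indepFun_iff_map_prod_eq_prod_map_map hPm.aemeasurable hVm.aemeasurable).mp hindep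
  have key : ∫⁻ ω, ENNReal.ofReal (if P ω ≤ c * V ω then (V ω)⁻¹ else 0) ∂μ
      ≤ ENNReal.ofReal c := by
    have h1 : ∫⁻ ω, ENNReal.ofReal (if P ω ≤ c * V ω then (V ω)⁻¹ else 0) ∂μ
        = ∫⁻ ω, g (P ω, V ω) ∂μ := by
      congr 1; ext ω; simp only [hg]; split <;> simp
    rw [h1, ← lintegral_map hgm (hPm.prodMk hVm), hmap,
      lintegral_prod_symm _ hgm.aemeasurable]
    have hprobP : IsProbabilityMeasure (μ.map P) := Measure.isProbabilityMeasure_map hPm.aemeasurable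
    have hprobV : IsProbabilityMeasure (μ.map V) := Measure.isProbabilityMeasure_map hVm.aemeasurable
    have hVae : ∀ᵐ v ∂(μ.map V), 0 ≤ v := by
      rw [MeasureTheory.ae_map_iff hVm.aemeasurable measurableSet_Ici]
      exact ae_of_all _ hV0
    have hbound : ∀ᵐ v ∂(μ.map V), ∫⁻ p, g (p, v) ∂(μ.map P) ≤ ENNReal.ofReal c := by
      filter_upwards [hVae] with v hv
      have hinner : ∫⁻ p, g (p, v) ∂(μ.map P)
          = ENNReal.ofReal v⁻¹ * (μ.map P) (Set.Iic (c * v)) := by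
        have hfun : ∀ p, g (p, v)
            = (Set.Iic (c * v)).indicator (fun _ => ENNReal.ofReal v⁻¹) p := by
          intro p
          by_cases h : p ≤ c * v <;> simp [hg, Set.indicator, h]
        simp_rw [hfun]
        exact lintegral_indicator_const measurableSet_Iic _
      have hmeas : (μ.map P) (Set.Iic (c * v)) = μ {ω | P ω ≤ c * v} := by
        rw [Measure.map_apply hPm measurableSet_Iic]; rfl
      rcases eq_or_lt_of_le hv with hv0 | hv0
      · rw [hinner, ← hv0]
        simp
      · rw [hinner, hmeas]
        have hμle : μ {ω | P ω ≤ c * v} ≤ ENNReal.ofReal (c * v) := by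
          rcases le_or_gt (c * v) 1 with hle | hgt
          · exact hsuper (c * v) ⟨by positivity, hle⟩
          · calc μ {ω | P ω ≤ c * v} ≤ 1 := prob_le_one
              _ ≤ ENNReal.ofReal (c * v) := by
                rw [ENNReal.one_le_ofReal]; exact hgt.le
        calc ENNReal.ofReal v⁻¹ * μ {ω | P ω ≤ c * v}
            ≤ ENNReal.ofReal v⁻¹ * ENNReal.ofReal (c * v) :=
              mul_le_mul_right hμle _
          _ = ENNReal.ofReal (v⁻¹ * (c * v)) := by
              rw [ENNReal.ofReal_mul (inv_nonneg.mpr hv)]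
          _ = ENNReal.ofReal c := by
              congr 1; field_simp
    calc ∫⁻ v, ∫⁻ p, g (p, v) ∂(μ.map P) ∂(μ.map V)
        ≤ ∫⁻ _, ENNReal.ofReal c ∂(μ.map V) := lintegral_mono_ae hbound
      _ = ENNReal.ofReal c := by simp
  have hfm : Measurable fun ω => (if P ω ≤ c * V ω then (V ω)⁻¹ else 0) := by
    apply Measurable.ite
    · exact measurableSet_le hPm (measurable_const.mul hVm)
    · exact hVm.inv
    · exact measurable_const
  have hnn : 0 ≤ᵐ[μ] fun ω => (if P ω ≤ c * V ω then (V ω)⁻¹ else 0) := by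
    refine ae_of_all _ fun ω => ?_
    simp only [Pi.zero_apply]
    split
    · exact inv_nonneg.mpr (hV0 ω)
    · exact le_refl 0
  rw [integral_eq_lintegral_of_nonneg_ae hnn hfm.aestronglyMeasurable]
  exact ENNReal.toReal_le_of_le_ofReal hc.le key
end
end
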